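/- A conditional lower prevision lp on C ⊆ C(X) is coherent if and only if it is real-valued and, for all n ≥ 0, all λ₀,…,λ_n ≥ 0 and all (f₀,B₀),…,(f_n,B_n) ∈ C, writing B := B₀ ∪ … ∪ B_n, one has sup_{x ∈ B} ( ∑_{i=1}^n λ_i·1_{B_i}(x)·(f_i(x) − lp(f_i|B_i)) − λ₀·1_{B₀}(x)·(f₀(x) − lp(f₀|B₀)) ) ≥ 0. -/

import Mathlib

open scoped BigOperators

namespace IPaper

variable {X : Type*}

/-- A gamble on `X`: a bounded real-valued function. -/
def IsGamble (f : X → ℝ) : Prop := ∃ M : ℝ, ∀ x, |f x| ≤ M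

/-- The indicator gamble of an event. -/
noncomputable def ind (B : Set X) : X → ℝ := Set.indicator B 1

/-- The set `G_{>0}(X)` of nonnegative nonzero gambles. -/
def Gpos (X : Type*) : Set (X → ℝ) := {f | IsGamble f ∧ 0 ≤ f ∧ f ≠ 0}

/-- A coherent set of desirable gambles. -/
structure CoherentSDG (D : Set (X → ℝ)) : Prop where
  subset_gambles : ∀ f ∈ D, IsGamble f
  d1 : ∀ f : X → ℝ, IsGamble f → 0 ≤ f → f ≠ 0 → f ∈ D
  d2 : ∀ f ∈ D, ∀ l : ℝ, 0 < l → l • f ∈ D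
  d3 : ∀ f ∈ D, ∀ g ∈ D, f + g ∈ D
  d4 : ∀ f : X → ℝ, f ≤ 0 → f ∉ D

/-- `posi A`: positive linear hull of `A`. -/
def posi (A : Set (X → ℝ)) : Set (X → ℝ) :=
  {g | ∃ (n : ℕ) (l : Fin (n + 1) → ℝ) (h : Fin (n + 1) → X → ℝ),
    (∀ i, 0 < l i) ∧ (∀ i, h i ∈ A) ∧ g = ∑ i, l i • h i}

/-- `E(A) := posi (A ∪ G_{>0}(X))`. -/
def natExtSet (A : Set (X → ℝ)) : Set (X → ℝ) := posi (A ∪ Gpos X)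

/-- `C(X)`: all pairs of a gamble and a nonempty event. -/
def domC (X : Type*) : Set ((X → ℝ) × Set X) := {p | IsGamble p.1 ∧ p.2.Nonempty}

/-- The conditional lower prevision `lp_D` derived from a set of gambles `D`. -/
noncomputable def lpOf (D : Set (X → ℝ)) (f : X → ℝ) (B : Set X) : EReal :=
  sSup (Real.toEReal '' {m : ℝ | (fun x => (f x - m) * ind B x) ∈ D})

/-- Coherence (Williams) of a conditional lower prevision on a domain `C`. -/
def Coherent (C : Set ((X → ℝ) × Set X)) (lp : (X → ℝ) → Set X → EReal) : Prop :=
  ∃ D : Set (X → ℝ), CoherentSDG D ∧ ∀ p ∈ C, lp p.1 p.2 = lpOf D p.1 p.2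

/-- The set `A_lp`. -/
def Alp (C : Set ((X → ℝ) × Set X)) (lp : (X → ℝ) → Set X → EReal) : Set (X → ℝ) :=
  {g | ∃ p ∈ C, ∃ m : ℝ, (m : EReal) < lp p.1 p.2 ∧ g = fun x => (p.1 x - m) * ind p.2 x}

/-- `E(lp) := E(A_lp)`. -/
def ElpSet (C : Set ((X → ℝ) × Set X)) (lp : (X → ℝ) → Set X → EReal) : Set (X → ℝ) :=
  natExtSet (Alp C lp)

/-- The natural extension of `lp` to all of `C(X)`. -/
noncomputable def natExtLP (C : Set ((X → ℝ) × Set X)) (lp : (X → ℝ) → Set X → EReal)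
    (f : X → ℝ) (B : Set X) : EReal :=
  lpOf (ElpSet C lp) f B

/-- Simple `B`-measurable gamble. -/
def SimpleMeas (Bfam : Set (Set X)) (g : X → ℝ) : Prop :=
  ∃ (c0 : ℝ) (n : ℕ) (c : Fin n → ℝ) (Bs : Fin n → Set X),
    0 ≤ c0 ∧ (∀ i, 0 ≤ c i) ∧ (∀ i, Bs i ∈ Bfam) ∧
    g = fun x => c0 + ∑ i, c i * ind (Bs i) x

/-- `B`-measurable gamble: uniform limit of nonnegative simple `B`-measurable gambles. -/
def BMeas (Bfam : Set (Set X)) (g : X → ℝ) : Prop :=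
  ∃ gs : ℕ → X → ℝ, (∀ n, 0 ≤ gs n ∧ SimpleMeas Bfam (gs n)) ∧
    TendstoUniformly gs g Filter.atTop

/-- A conditional linear prevision on `C(X)`: a coherent self-conjugate conditional
lower prevision on the full domain. -/
def CondLinPrev (P : (X → ℝ) → Set X → EReal) : Prop :=
  Coherent (domC X) P ∧ ∀ p ∈ domC X, P p.1 p.2 = -P (-p.1) p.2

section Product

variable {X1 X2 : Type*}

/-- `A_{1→2}`. -/
def A12 (D2 : Set (X2 → ℝ)) (F1 : Set (Set X1)) : Set (X1 × X2 → ℝ) :=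
  {g | ∃ f2 ∈ D2, ∃ B1 ∈ F1 ∪ {Set.univ}, g = fun p => f2 p.2 * ind B1 p.1}

/-- `A_{2→1}`. -/
def A21 (D1 : Set (X1 → ℝ)) (F2 : Set (Set X2)) : Set (X1 × X2 → ℝ) :=
  {g | ∃ f1 ∈ D1, ∃ B2 ∈ F2 ∪ {Set.univ}, g = fun p => f1 p.1 * ind B2 p.2}

/-- `D1 ⊗ D2`, relative to the families of conditioning events `F1`, `F2`. -/
def indNatExt (D1 : Set (X1 → ℝ)) (D2 : Set (X2 → ℝ))
    (F1 : Set (Set X1)) (F2 : Set (Set X2)) : Set (X1 × X2 → ℝ) :=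
  natExtSet (A12 D2 F1 ∪ A21 D1 F2)

/-- `marg_1(D)`. -/
def marg1 (D : Set (X1 × X2 → ℝ)) : Set (X1 → ℝ) :=
  {f | IsGamble f ∧ (fun p : X1 × X2 => f p.1) ∈ D}

/-- `marg_2(D)`. -/
def marg2 (D : Set (X1 × X2 → ℝ)) : Set (X2 → ℝ) :=
  {f | IsGamble f ∧ (fun p : X1 × X2 => f p.2) ∈ D}

/-- `marg_1(D|B2)`. -/
def marg1c (D : Set (X1 × X2 → ℝ)) (B2 : Set X2) : Set (X1 → ℝ) :=
  {f | IsGamble f ∧ (fun p : X1 × X2 => f p.1 * ind B2 p.2) ∈ D}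

/-- `marg_2(D|B1)`. -/
def marg2c (D : Set (X1 × X2 → ℝ)) (B1 : Set X1) : Set (X2 → ℝ) :=
  {f | IsGamble f ∧ (fun p : X1 × X2 => f p.2 * ind B1 p.1) ∈ D}

/-- Epistemic independence of a set of desirable gambles on `X1 × X2`. -/
def EpIndSDG (F1 : Set (Set X1)) (F2 : Set (Set X2)) (D : Set (X1 × X2 → ℝ)) : Prop :=
  (∀ B2 ∈ F2, marg1c D B2 = marg1 D) ∧ (∀ B1 ∈ F1, marg2c D B1 = marg2 D)

/-- Independent product (of sets of desirable gambles). -/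
def IndProductSDG (F1 : Set (Set X1)) (F2 : Set (Set X2))
    (D1 : Set (X1 → ℝ)) (D2 : Set (X2 → ℝ)) (D : Set (X1 × X2 → ℝ)) : Prop :=
  CoherentSDG D ∧ EpIndSDG F1 F2 D ∧ marg1 D = D1 ∧ marg2 D = D2

/-- The independent natural extension `lp1 ⊗ lp2` on `C(X1 × X2)`. -/
noncomputable def lpProd (C1 : Set ((X1 → ℝ) × Set X1)) (lp1 : (X1 → ℝ) → Set X1 → EReal)
    (C2 : Set ((X2 → ℝ) × Set X2)) (lp2 : (X2 → ℝ) → Set X2 → EReal)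
    (F1 : Set (Set X1)) (F2 : Set (Set X2)) :
    (X1 × X2 → ℝ) → Set (X1 × X2) → EReal :=
  lpOf (indNatExt (ElpSet C1 lp1) (ElpSet C2 lp2) F1 F2)

/-- An independent domain `C ⊆ C(X1 × X2)`. -/
def IndepDomain (F1 : Set (Set X1)) (F2 : Set (Set X2))
    (C : Set ((X1 × X2 → ℝ) × Set (X1 × X2))) : Prop :=
  (∀ (f1 : X1 → ℝ) (B1 : Set X1), IsGamble f1 → B1.Nonempty → ∀ B2 ∈ F2,
    (((fun p : X1 × X2 => f1 p.1), B1 ×ˢ (Set.univ : Set X2)) ∈ C ↔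
      ((fun p : X1 × X2 => f1 p.1), B1 ×ˢ B2) ∈ C)) ∧
  (∀ (f2 : X2 → ℝ) (B2 : Set X2), IsGamble f2 → B2.Nonempty → ∀ B1 ∈ F1,
    (((fun p : X1 × X2 => f2 p.2), (Set.univ : Set X1) ×ˢ B2) ∈ C ↔
      ((fun p : X1 × X2 => f2 p.2), B1 ×ˢ B2) ∈ C))

/-- Epistemic independence of a conditional lower prevision on a domain `C`. -/
def EpIndLP (F1 : Set (Set X1)) (F2 : Set (Set X2))
    (C : Set ((X1 × X2 → ℝ) × Set (X1 × X2)))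
    (lp : (X1 × X2 → ℝ) → Set (X1 × X2) → EReal) : Prop :=
  (∀ (f1 : X1 → ℝ) (B1 : Set X1), IsGamble f1 → B1.Nonempty →
    ((fun p : X1 × X2 => f1 p.1), B1 ×ˢ (Set.univ : Set X2)) ∈ C → ∀ B2 ∈ F2,
    lp (fun p : X1 × X2 => f1 p.1) (B1 ×ˢ (Set.univ : Set X2)) =
      lp (fun p : X1 × X2 => f1 p.1) (B1 ×ˢ B2)) ∧
  (∀ (f2 : X2 → ℝ) (B2 : Set X2), IsGamble f2 → B2.Nonempty →
    ((fun p : X1 × X2 => f2 p.2), (Set.univ : Set X1) ×ˢ B2) ∈ C → ∀ B1 ∈ F1,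
    lp (fun p : X1 × X2 => f2 p.2) ((Set.univ : Set X1) ×ˢ B2) =
      lp (fun p : X1 × X2 => f2 p.2) (B1 ×ˢ B2))

/-- Independent product of two conditional lower previsions, on the joint domain `C`. -/
def IndProductLP (F1 : Set (Set X1)) (F2 : Set (Set X2))
    (C1 : Set ((X1 → ℝ) × Set X1)) (lp1 : (X1 → ℝ) → Set X1 → EReal)
    (C2 : Set ((X2 → ℝ) × Set X2)) (lp2 : (X2 → ℝ) → Set X2 → EReal)
    (C : Set ((X1 × X2 → ℝ) × Set (X1 × X2)))
    (lp : (X1 × X2 → ℝ) → Set (X1 × X2) → EReal) : Prop :=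
  Coherent C lp ∧ EpIndLP F1 F2 C lp ∧
  (∀ p ∈ C1, lp (fun q : X1 × X2 => p.1 q.1) (p.2 ×ˢ (Set.univ : Set X2)) = lp1 p.1 p.2) ∧
  (∀ p ∈ C2, lp (fun q : X1 × X2 => p.1 q.2) ((Set.univ : Set X1) ×ˢ p.2) = lp2 p.1 p.2)

end Product


/-!
If `lp = lp_D` on `C` for a coherent `D`, and some Williams gain stayed below `-δ` on the
union of its events, then moving every price by a small `ε` (buying each `fᵢ` at
`lp(fᵢ|Bᵢ) - ε`, which is desirable, and selling `f₀` at `lp(f₀|B₀) + ε`) leaves a gamble in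
`G_{>0}`; adding the two makes `λ₀ (f₀ - lp(f₀|B₀) - ε) 1_{B₀}` desirable, contradicting (D4)
if `λ₀ = 0` and the supremum defining `lp(f₀|B₀)` otherwise.

Conversely, under the Williams condition take `D := E(lp) = posi (A_lp ∪ G_{>0})`. Every
element of `E(lp)` dominates a nonnegative combination of the gains `(fᵢ - lp(fᵢ|Bᵢ)) 1_{Bᵢ}`
plus a positive margin on `⋃ Bᵢ`, because each member of `A_lp` uses a price strictly below
`lp(fᵢ|Bᵢ)`. So a nonpositive element of `E(lp)`, or `(f - m) 1_B ∈ E(lp)` with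
`m > lp(f|B)`, would give a Williams gain bounded away from `0` from above; this yields (D4)
and `lp_{E(lp)} = lp` on `C`.
-/

section Gambles

variable {ι : Type*}

lemma ind_of_mem {B : Set X} {x : X} (h : x ∈ B) : ind B x = 1 :=
  Set.indicator_of_mem h 1

lemma ind_of_notMem {B : Set X} {x : X} (h : x ∉ B) : ind B x = 0 :=
  Set.indicator_of_notMem h 1

lemma ind_nonneg (B : Set X) (x : X) : 0 ≤ ind B x :=
  Set.indicator_nonneg (fun _ _ => zero_le_one) x

lemma ind_le_one (B : Set X) (x : X) : ind B x ≤ 1 :=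
  Set.indicator_le_self' (fun _ _ => zero_le_one) x

lemma isGamble_const (c : ℝ) : IsGamble fun _ : X => c :=
  ⟨|c|, fun _ => le_rfl⟩

lemma isGamble_ind (B : Set X) : IsGamble (ind B) :=
  ⟨1, fun x => by rw [abs_of_nonneg (ind_nonneg B x)]; exact ind_le_one B x⟩

lemma IsGamble.add {f g : X → ℝ} (hf : IsGamble f) (hg : IsGamble g) :
    IsGamble fun x => f x + g x := by
  obtain ⟨M, hM⟩ := hf
  obtain ⟨N, hN⟩ := hg
  exact ⟨M + N, fun x => (abs_add_le _ _).trans (add_le_add (hM x) (hN x))⟩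

lemma IsGamble.neg {f : X → ℝ} (hf : IsGamble f) : IsGamble fun x => -f x := by
  obtain ⟨M, hM⟩ := hf
  exact ⟨M, fun x => (abs_neg (f x)).trans_le (hM x)⟩

lemma IsGamble.sub {f g : X → ℝ} (hf : IsGamble f) (hg : IsGamble g) :
    IsGamble fun x => f x - g x := by
  simpa only [sub_eq_add_neg] using hf.add hg.neg

lemma IsGamble.mul {f g : X → ℝ} (hf : IsGamble f) (hg : IsGamble g) :
    IsGamble fun x => f x * g x := by
  obtain ⟨M, hM⟩ := hf
  obtain ⟨N, hN⟩ := hg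
  exact ⟨M * N, fun x => (abs_mul _ _).trans_le
    (mul_le_mul (hM x) (hN x) (abs_nonneg _) ((abs_nonneg _).trans (hM x)))⟩

lemma isGamble_sum (s : Finset ι) {g : ι → X → ℝ} (hg : ∀ i ∈ s, IsGamble (g i)) :
    IsGamble fun x => ∑ i ∈ s, g i x := by
  classical
  induction s using Finset.induction_on with
  | empty => simpa using isGamble_const (0 : ℝ)
  | insert a s ha ih =>
    simp only [Finset.sum_insert ha]
    exact (hg a (s.mem_insert_self a)).add (ih fun i hi => hg i (Finset.mem_insert_of_mem hi))

lemma isGamble_sub_mul_ind {f : X → ℝ} (hf : IsGamble f) (m : ℝ) (B : Set X) :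
    IsGamble fun x => (f x - m) * ind B x :=
  (hf.sub (isGamble_const m)).mul (isGamble_ind B)

lemma mem_Gpos {f : X → ℝ} (hf : IsGamble f) (h0 : 0 ≤ f) {x : X} (hx : 0 < f x) :
    f ∈ Gpos X :=
  ⟨hf, h0, fun h => hx.ne' (congrFun h x)⟩

lemma exists_pos_of_mem_Gpos {f : X → ℝ} (hf : f ∈ Gpos X) : ∃ x, 0 < f x := by
  by_contra! h
  exact hf.2.2 (funext fun x => le_antisymm (h x) (hf.2.1 x))

lemma exists_pos_mul_ind_iUnion_le [Fintype ι] (w : ι → ℝ) (hw : ∀ i, 0 < w i)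
    (B : ι → Set X) : ∃ c > 0, ∀ x, c * ind (⋃ i, B i) x ≤ ∑ i, w i * ind (B i) x := by
  obtain ⟨c, hc, hcw⟩ : ∃ c > 0, ∀ i, c ≤ w i := by
    rcases isEmpty_or_nonempty ι with _ | _
    · exact ⟨1, one_pos, isEmptyElim⟩
    · obtain ⟨j, hj⟩ := Finite.exists_min w
      exact ⟨w j, hw j, hj⟩
  have hterm : ∀ i x, 0 ≤ w i * ind (B i) x := fun i x => mul_nonneg (hw i).le (ind_nonneg _ x)
  refine ⟨c, hc, fun x => ?_⟩
  by_cases hx : x ∈ ⋃ i, B i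
  · obtain ⟨j, hj⟩ := Set.mem_iUnion.1 hx
    calc c * ind (⋃ i, B i) x ≤ w j * ind (B j) x := by
          rw [ind_of_mem hx, ind_of_mem hj, mul_one, mul_one]; exact hcw j
      _ ≤ ∑ i, w i * ind (B i) x :=
          Finset.single_le_sum (fun i _ => hterm i x) (Finset.mem_univ j)
  · rw [ind_of_notMem hx, mul_zero]
    exact Finset.sum_nonneg fun i _ => hterm i x

lemma sum_subtype_le_sum [Fintype ι] {p : ι → Prop} [DecidablePred p] {f : ι → ℝ}
    (hf : ∀ i, ¬p i → 0 ≤ f i) : ∑ i : {i // p i}, f i ≤ ∑ i, f i := by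
  rw [← Finset.sum_subtype (Finset.univ.filter p) (fun i => by simp) f]
  exact Finset.sum_le_sum_of_subset_of_nonneg (Finset.filter_subset _ _)
    fun i _ hi => hf i (by simpa using hi)

end Gambles

section Posi

variable {A : Set (X → ℝ)}

lemma mem_posi_of_mem {h : X → ℝ} (hh : h ∈ A) : h ∈ posi A :=
  ⟨0, fun _ => 1, fun _ => h, fun _ => one_pos, fun _ => hh, by simp⟩

lemma smul_mem_posi {g : X → ℝ} (hg : g ∈ posi A) {c : ℝ} (hc : 0 < c) : c • g ∈ posi A := by
  obtain ⟨n, l, h, hl, hh, rfl⟩ := hg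
  refine ⟨n, fun i => c * l i, h, fun i => mul_pos hc (hl i), hh, ?_⟩
  simp only [Finset.smul_sum, smul_smul]

lemma add_mem_posi {g g' : X → ℝ} (hg : g ∈ posi A) (hg' : g' ∈ posi A) : g + g' ∈ posi A := by
  obtain ⟨n, l, h, hl, hh, rfl⟩ := hg
  obtain ⟨n', l', h', hl', hh', rfl⟩ := hg'
  refine ⟨n + 1 + n', (Fin.append l l' : Fin ((n + 1) + (n' + 1)) → ℝ),
    (Fin.append h h' : Fin ((n + 1) + (n' + 1)) → X → ℝ), fun i => ?_, fun i => ?_, ?_⟩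
  · refine Fin.addCases (m := n + 1) (n := n' + 1) (fun j => ?_) (fun j => ?_) i
    · rw [Fin.append_left]; exact hl j
    · rw [Fin.append_right]; exact hl' j
  · refine Fin.addCases (m := n + 1) (n := n' + 1) (fun j => ?_) (fun j => ?_) i
    · rw [Fin.append_left]; exact hh j
    · rw [Fin.append_right]; exact hh' j
  · symm
    exact (Fin.sum_univ_add (f := fun i : Fin ((n + 1) + (n' + 1)) =>
      Fin.append l l' i • Fin.append h h' i)).trans
      (by simp only [Fin.append_left, Fin.append_right])

lemma isGamble_of_mem_posi (hA : ∀ h ∈ A, IsGamble h) {g : X → ℝ} (hg : g ∈ posi A) :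
    IsGamble g := by
  obtain ⟨n, l, h, -, hh, rfl⟩ := hg
  rw [Finset.sum_fn]
  exact isGamble_sum _ fun i _ => (isGamble_const (l i)).mul (hA _ (hh i))

end Posi

lemma coe_le_lpOf {D : Set (X → ℝ)} {f : X → ℝ} {B : Set X} {m : ℝ}
    (hm : (fun x => (f x - m) * ind B x) ∈ D) : (m : EReal) ≤ lpOf D f B :=
  le_sSup ⟨m, hm, rfl⟩

namespace CoherentSDG

variable {D : Set (X → ℝ)} (hD : CoherentSDG D) {f : X → ℝ} {B : Set X}
include hD

lemma mem_of_mem_Gpos {g : X → ℝ} (hg : g ∈ Gpos X) : g ∈ D :=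
  hD.d1 g hg.1 hg.2.1 hg.2.2

lemma sum_smul_mem_or_eq_zero {ι : Type*} (s : Finset ι) {c : ι → ℝ} {g : ι → X → ℝ}
    (hc : ∀ i ∈ s, 0 ≤ c i) (hg : ∀ i ∈ s, g i ∈ D) :
    ∑ i ∈ s, c i • g i ∈ D ∨ ∑ i ∈ s, c i • g i = 0 := by
  classical
  induction s using Finset.induction_on with
  | empty => exact Or.inr rfl
  | insert a s ha ih =>
    rw [Finset.sum_insert ha]
    obtain ⟨hca, hcs⟩ := Finset.forall_mem_insert .. |>.1 hc
    obtain ⟨hga, hgs⟩ := Finset.forall_mem_insert .. |>.1 hg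
    rcases hca.eq_or_lt with hca | hca
    · rw [← hca, zero_smul, zero_add]
      exact ih hcs hgs
    · have hhead := hD.d2 _ hga _ hca
      rcases ih hcs hgs with hrest | hrest
      · exact Or.inl (hD.d3 _ hhead _ hrest)
      · exact Or.inl (by rwa [hrest, add_zero])

lemma add_mem_of_mem_Gpos {g p : X → ℝ} (hg : g ∈ D ∨ g = 0) (hp : p ∈ Gpos X) : g + p ∈ D := by
  rcases hg with hg | rfl
  · exact hD.d3 _ hg _ (hD.mem_of_mem_Gpos hp)
  · rw [zero_add]
    exact hD.mem_of_mem_Gpos hp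

lemma mem_of_coe_lt_lpOf (hB : B.Nonempty) {m : ℝ} (hm : (m : EReal) < lpOf D f B) :
    (fun x => (f x - m) * ind B x) ∈ D := by
  obtain ⟨_, ⟨m', hm', rfl⟩, hmm'⟩ := lt_sSup_iff.1 hm
  have hmm' : m < m' := EReal.coe_lt_coe_iff.1 hmm'
  obtain ⟨x₀, hx₀⟩ := hB
  have hgap : (fun x => (m' - m) * ind B x) ∈ Gpos X :=
    mem_Gpos ((isGamble_const _).mul (isGamble_ind B))
      (fun x => mul_nonneg (sub_nonneg.2 hmm'.le) (ind_nonneg B x)) (x := x₀)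
      (by rw [ind_of_mem hx₀, mul_one]; exact sub_pos.2 hmm')
  convert hD.d3 _ hm' _ (hD.mem_of_mem_Gpos hgap) using 1
  funext x
  simp only [Pi.add_apply]
  ring

lemma lpOf_ne_top (hf : IsGamble f) : lpOf D f B ≠ ⊤ := by
  obtain ⟨M, hM⟩ := hf
  refine ne_top_of_le_ne_top (EReal.coe_ne_top M) (sSup_le ?_)
  rintro _ ⟨m, hm, rfl⟩
  by_contra! hMm
  refine hD.d4 _ (fun x => ?_) hm
  have hMm : M < m := EReal.coe_lt_coe_iff.1 hMm
  exact mul_nonpos_of_nonpos_of_nonneg (by linarith [le_of_abs_le (hM x)]) (ind_nonneg B x)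

lemma lpOf_ne_bot (hf : IsGamble f) (hB : B.Nonempty) : lpOf D f B ≠ ⊥ := by
  obtain ⟨M, hM⟩ := hf
  obtain ⟨x₀, hx₀⟩ := hB
  have hpos : ∀ x, 0 < f x - (-M - 1) := fun x => by linarith [neg_abs_le (f x), hM x]
  have hmem : (fun x => (f x - (-M - 1)) * ind B x) ∈ D :=
    hD.mem_of_mem_Gpos (mem_Gpos (isGamble_sub_mul_ind ⟨M, hM⟩ _ B)
      (fun x => mul_nonneg (hpos x).le (ind_nonneg B x)) (x := x₀)
      (by rw [ind_of_mem hx₀, mul_one]; exact hpos x₀))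
  exact ne_bot_of_le_ne_bot (EReal.coe_ne_bot _) (coe_le_lpOf hmem)

lemma coe_toReal_lpOf (hf : IsGamble f) (hB : B.Nonempty) :
    ((lpOf D f B).toReal : EReal) = lpOf D f B :=
  EReal.coe_toReal (hD.lpOf_ne_top hf) (hD.lpOf_ne_bot hf hB)

end CoherentSDG

section Williams

variable {C : Set ((X → ℝ) × Set X)} {lp : (X → ℝ) → Set X → EReal}

noncomputable def williamsGain (lp : (X → ℝ) → Set X → EReal) {ι : Type*} [Fintype ι]
    (l : ι → ℝ) (q : ι → (X → ℝ) × Set X) (l₀ : ℝ) (q₀ : (X → ℝ) × Set X) (x : X) : ℝ :=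
  (∑ i, l i * ind (q i).2 x * ((q i).1 x - (lp (q i).1 (q i).2).toReal)) -
    l₀ * ind q₀.2 x * (q₀.1 x - (lp q₀.1 q₀.2).toReal)

/-- Every Williams gain has nonnegative supremum over `q₀.2 ∪ ⋃ i, (q i).2`, phrased
without `sSup` so that no boundedness side condition (or junk value) enters. -/
def WilliamsCondition (C : Set ((X → ℝ) × Set X)) (lp : (X → ℝ) → Set X → EReal) : Prop :=
  ∀ {ι : Type} [Fintype ι] (l : ι → ℝ) (q : ι → (X → ℝ) × Set X) (l₀ : ℝ)
    (q₀ : (X → ℝ) × Set X), (∀ i, 0 ≤ l i) → (∀ i, q i ∈ C) → 0 ≤ l₀ → q₀ ∈ C →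
    ∀ δ > 0, ∃ x ∈ q₀.2 ∪ ⋃ i, (q i).2, -δ < williamsGain lp l q l₀ q₀ x

lemma williamsGain_comp_equiv {ι κ : Type*} [Fintype ι] [Fintype κ] (e : κ ≃ ι) (l : ι → ℝ)
    (q : ι → (X → ℝ) × Set X) (l₀ : ℝ) (q₀ : (X → ℝ) × Set X) :
    williamsGain lp (l ∘ e) (q ∘ e) l₀ q₀ = williamsGain lp l q l₀ q₀ := by
  funext x
  simp only [williamsGain, Function.comp_apply]
  rw [e.sum_comp (fun i => l i * ind (q i).2 x * ((q i).1 x - (lp (q i).1 (q i).2).toReal))]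

lemma isGamble_williamsGain {ι : Type*} [Fintype ι] (l : ι → ℝ) {q : ι → (X → ℝ) × Set X}
    (l₀ : ℝ) {q₀ : (X → ℝ) × Set X} (hq : ∀ i, IsGamble (q i).1) (hq₀ : IsGamble q₀.1) :
    IsGamble (williamsGain lp l q l₀ q₀) :=
  (isGamble_sum _ fun i _ => ((isGamble_const _).mul (isGamble_ind _)).mul
    ((hq i).sub (isGamble_const _))).sub
    (((isGamble_const _).mul (isGamble_ind _)).mul (hq₀.sub (isGamble_const _)))

lemma iUnion_fin_eq_union {n : ℕ} (q : Fin (n + 1) → (X → ℝ) × Set X) :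
    ⋃ i, (q i).2 = (q 0).2 ∪ ⋃ i : Fin n, (q i.succ).2 := by
  ext x
  simp [Fin.exists_fin_succ]

lemma williamsCondition_iff_sSup (hC : C ⊆ domC X) :
    WilliamsCondition C lp ↔
      ∀ (n : ℕ) (l : Fin (n + 1) → ℝ) (q : Fin (n + 1) → (X → ℝ) × Set X),
        (∀ i, 0 ≤ l i) → (∀ i, q i ∈ C) →
        0 ≤ sSup {y : ℝ | ∃ x ∈ ⋃ i, (q i).2,
          y = williamsGain lp (fun i : Fin n => l i.succ) (fun i => q i.succ) (l 0) (q 0) x} := by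
  constructor
  · intro hW n l q hl hq
    by_contra! hneg
    obtain ⟨x, hxU, hx⟩ := hW (fun i : Fin n => l i.succ) (fun i => q i.succ) (l 0) (q 0)
      (fun i => hl _) (fun i => hq _) (hl 0) (hq 0) _ (neg_pos.2 hneg)
    obtain ⟨M, hM⟩ := isGamble_williamsGain (lp := lp) (fun i : Fin n => l i.succ) (l 0)
      (fun i => (hC (hq i.succ)).1) (hC (hq 0)).1
    have hbdd : BddAbove {y : ℝ | ∃ x ∈ ⋃ i, (q i).2,
        y = williamsGain lp (fun i : Fin n => l i.succ) (fun i => q i.succ) (l 0) (q 0) x} :=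
      ⟨M, by rintro _ ⟨x, -, rfl⟩; exact (le_abs_self _).trans (hM x)⟩
    rw [← iUnion_fin_eq_union] at hxU
    linarith [le_csSup hbdd ⟨x, hxU, rfl⟩]
  · intro hW ι _ l q l₀ q₀ hl hq hl₀ hq₀ δ hδ
    by_contra! hloss
    set e := (Fintype.equivFin ι).symm
    have hW' := hW _ (Fin.cons l₀ (l ∘ e)) (Fin.cons q₀ (q ∘ e))
      (Fin.cases hl₀ fun i => hl _) (Fin.cases hq₀ fun i => hq _)
    simp only [iUnion_fin_eq_union, Fin.cons_succ, Fin.cons_zero] at hW'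
    obtain ⟨x₀, hx₀⟩ := (hC hq₀).2
    refine (hW'.trans (csSup_le ⟨_, x₀, Or.inl hx₀, rfl⟩ ?_)).not_gt (neg_neg_of_pos hδ)
    rintro _ ⟨x, hx, rfl⟩
    rw [Function.comp_def, e.surjective.iUnion_comp (fun i => (q i).2)] at hx
    exact williamsGain_comp_equiv e l q l₀ q₀ ▸ hloss x hx

end Williams

section Forward

variable {C : Set ((X → ℝ) × Set X)} {lp : (X → ℝ) → Set X → EReal}

lemma sub_sum_eq_neg_williamsGain {ι : Type*} [Fintype ι] (l : ι → ℝ)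
    (q : ι → (X → ℝ) × Set X) (l₀ : ℝ) (q₀ : (X → ℝ) × Set X) (ε : ℝ) (x : X) :
    l₀ * ((q₀.1 x - ((lp q₀.1 q₀.2).toReal + ε)) * ind q₀.2 x) -
        ∑ i, l i * (((q i).1 x - ((lp (q i).1 (q i).2).toReal - ε)) * ind (q i).2 x) =
      -williamsGain lp l q l₀ q₀ x - ε * (l₀ * ind q₀.2 x + ∑ i, l i * ind (q i).2 x) := by
  have hsum : ∑ i, l i * (((q i).1 x - ((lp (q i).1 (q i).2).toReal - ε)) * ind (q i).2 x) =
      ∑ i, l i * ind (q i).2 x * ((q i).1 x - (lp (q i).1 (q i).2).toReal) +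
        ε * ∑ i, l i * ind (q i).2 x := by
    rw [Finset.mul_sum, ← Finset.sum_add_distrib]
    exact Finset.sum_congr rfl fun i _ => by ring
  rw [hsum, williamsGain]
  ring

lemma mem_Gpos_of_williamsGain_le_neg (hC : C ⊆ domC X) {ι : Type*} [Fintype ι] {l : ι → ℝ}
    {q : ι → (X → ℝ) × Set X} {l₀ : ℝ} {q₀ : (X → ℝ) × Set X} (hl : ∀ i, 0 ≤ l i)
    (hq : ∀ i, q i ∈ C) (hl₀ : 0 ≤ l₀) (hq₀ : q₀ ∈ C) {δ ε : ℝ} (hε : 0 < ε)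
    (hεδ : ε * (l₀ + ∑ i, l i) < δ)
    (hloss : ∀ x ∈ q₀.2 ∪ ⋃ i, (q i).2, williamsGain lp l q l₀ q₀ x ≤ -δ) :
    (fun x => l₀ * ((q₀.1 x - ((lp q₀.1 q₀.2).toReal + ε)) * ind q₀.2 x) -
      ∑ i, l i * (((q i).1 x - ((lp (q i).1 (q i).2).toReal - ε)) * ind (q i).2 x)) ∈ Gpos X := by
  simp only [sub_sum_eq_neg_williamsGain]
  have hpos : ∀ x ∈ q₀.2 ∪ ⋃ i, (q i).2,
      0 < -williamsGain lp l q l₀ q₀ x - ε * (l₀ * ind q₀.2 x + ∑ i, l i * ind (q i).2 x) :=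
    fun x hx => by
      have hw : l₀ * ind q₀.2 x + ∑ i, l i * ind (q i).2 x ≤ l₀ + ∑ i, l i :=
        add_le_add (mul_le_of_le_one_right hl₀ (ind_le_one _ _))
          (Finset.sum_le_sum fun i _ => mul_le_of_le_one_right (hl i) (ind_le_one _ _))
      nlinarith [hloss x hx, mul_le_mul_of_nonneg_left hw hε.le]
  have hzero : ∀ x ∉ q₀.2 ∪ ⋃ i, (q i).2,
      -williamsGain lp l q l₀ q₀ x - ε * (l₀ * ind q₀.2 x + ∑ i, l i * ind (q i).2 x) = 0 :=
    fun x hx => by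
      simp only [Set.mem_union, Set.mem_iUnion, not_or, not_exists] at hx
      simp [williamsGain, ind_of_notMem hx.1, ind_of_notMem (hx.2 _)]
  obtain ⟨x₀, hx₀⟩ := (hC hq₀).2
  refine mem_Gpos ?_ (fun x => ?_) (hpos x₀ (Or.inl hx₀))
  · exact (isGamble_williamsGain l l₀ (fun i => (hC (hq i)).1) (hC hq₀).1).neg.sub
      ((isGamble_const ε).mul (((isGamble_const l₀).mul (isGamble_ind _)).add
        (isGamble_sum _ fun i _ => (isGamble_const (l i)).mul (isGamble_ind _))))
  · by_cases hx : x ∈ q₀.2 ∪ ⋃ i, (q i).2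
    · exact (hpos x hx).le
    · exact (hzero x hx).ge

theorem CoherentSDG.williamsCondition {D : Set (X → ℝ)} (hD : CoherentSDG D)
    (hC : C ⊆ domC X) (hlp : ∀ p ∈ C, lp p.1 p.2 = lpOf D p.1 p.2) :
    WilliamsCondition C lp := by
  intro ι _ l q l₀ q₀ hl hq hl₀ hq₀ δ hδ
  by_contra! hloss
  have hΛ : 0 ≤ l₀ + ∑ i, l i := add_nonneg hl₀ (Finset.sum_nonneg fun i _ => hl i)
  set ε := δ / (l₀ + ∑ i, l i + 1)
  have hε : 0 < ε := div_pos hδ (by linarith)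
  have hεδ : ε * (l₀ + ∑ i, l i) < δ := by
    rw [div_mul_eq_mul_div, div_lt_iff₀ (by linarith)]
    nlinarith
  set r : (X → ℝ) × Set X → ℝ := fun p => (lp p.1 p.2).toReal
  have hr : ∀ p ∈ C, (r p : EReal) = lpOf D p.1 p.2 := fun p hp => by
    simp only [r]
    rw [hlp p hp]
    exact hD.coe_toReal_lpOf (hC hp).1 (hC hp).2
  set g : ι → X → ℝ := fun i x => ((q i).1 x - (r (q i) - ε)) * ind (q i).2 x
  set k : X → ℝ := fun x => (q₀.1 x - (r q₀ + ε)) * ind q₀.2 x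
  have hg : ∀ i, g i ∈ D := fun i => hD.mem_of_coe_lt_lpOf (hC (hq i)).2
    (by rw [← hr _ (hq i)]; exact EReal.coe_lt_coe_iff.2 (sub_lt_self _ hε))
  have hk : l₀ • k ∈ D := by
    convert hD.add_mem_of_mem_Gpos
      (hD.sum_smul_mem_or_eq_zero Finset.univ (fun i _ => hl i) fun i _ => hg i)
      (mem_Gpos_of_williamsGain_le_neg hC hl hq hl₀ hq₀ hε hεδ hloss) using 1
    funext x
    simp [k, g, r, Finset.sum_apply]
  rcases hl₀.eq_or_lt with rfl | hl₀
  · exact hD.d4 _ (by simp) hk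
  · have hk : k ∈ D := by
      simpa [smul_smul, inv_mul_cancel₀ hl₀.ne'] using hD.d2 _ hk l₀⁻¹ (inv_pos.2 hl₀)
    have := (coe_le_lpOf hk).trans_eq (hr q₀ hq₀).symm
    linarith [EReal.coe_le_coe_iff.1 this]

end Forward

section Backward

variable {C : Set ((X → ℝ) × Set X)} {lp : (X → ℝ) → Set X → EReal}

lemma exists_sum_add_le_of_mem_ElpSet (hreal : ∀ p ∈ C, ∃ r : ℝ, lp p.1 p.2 = r) {g : X → ℝ}
    (hg : g ∈ ElpSet C lp) :
    ∃ (ι : Type) (_ : Fintype ι) (l : ι → ℝ) (q : ι → (X → ℝ) × Set X) (c : ℝ),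
      (∀ i, 0 ≤ l i) ∧ (∀ i, q i ∈ C) ∧ 0 < c ∧ (Nonempty ι ∨ ∃ x, 0 < g x) ∧
      ∀ x, (∑ i, l i * ind (q i).2 x * ((q i).1 x - (lp (q i).1 (q i).2).toReal)) +
        c * ind (⋃ i, (q i).2) x ≤ g x := by
  classical
  obtain ⟨n, a, h, ha, hh, rfl⟩ := hg
  choose q hq m hm hhq using fun k : {k // h k ∈ Alp C lp} => k.2
  set r : {k // h k ∈ Alp C lp} → ℝ := fun k => (lp (q k).1 (q k).2).toReal
  have hmr : ∀ k, m k < r k := fun k => by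
    obtain ⟨r', hr'⟩ := hreal _ (hq k)
    have hmk := hm k
    simp only [r]
    rw [hr'] at hmk ⊢
    exact EReal.coe_lt_coe_iff.1 hmk
  obtain ⟨c, hc, hcle⟩ := exists_pos_mul_ind_iUnion_le
    (fun k : {k // h k ∈ Alp C lp} => a k * (r k - m k))
    (fun k => mul_pos (ha k) (sub_pos.2 (hmr k))) (fun k => (q k).2)
  have hrest : ∀ k, h k ∉ Alp C lp → ∀ x, 0 ≤ a k * h k x := fun k hk x =>
    mul_nonneg (ha k).le (((hh k).resolve_left hk).2.1 x)
  have hg : ∀ x, (∑ k, a k • h k) x = ∑ k, a k * h k x := fun x => by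
    simp [Finset.sum_apply]
  refine ⟨{k // h k ∈ Alp C lp}, inferInstance, fun k => a k, q, c, fun k => (ha k).le, hq, hc,
    ?_, fun x => ?_⟩
  · rcases isEmpty_or_nonempty {k // h k ∈ Alp C lp} with hι | hι
    · have hnA : ∀ k, h k ∉ Alp C lp := fun k hk => hι.elim ⟨k, hk⟩
      obtain ⟨x, hx⟩ := exists_pos_of_mem_Gpos ((hh 0).resolve_left (hnA 0))
      refine Or.inr ⟨x, ?_⟩
      rw [hg]
      exact (mul_pos (ha 0) hx).trans_le (Finset.single_le_sum
        (fun k _ => hrest k (hnA k) x) (Finset.mem_univ 0))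
    · exact Or.inl hι
  · calc _ ≤ ∑ k : {k // h k ∈ Alp C lp}, a k * ind (q k).2 x * ((q k).1 x - r k) +
            ∑ k : {k // h k ∈ Alp C lp}, a k * (r k - m k) * ind (q k).2 x :=
          add_le_add le_rfl (hcle x)
      _ = ∑ k : {k // h k ∈ Alp C lp}, a k * h k x := by
          rw [← Finset.sum_add_distrib]
          refine Finset.sum_congr rfl fun k _ => ?_
          rw [hhq k]
          ring
      _ ≤ ∑ k, a k * h k x := sum_subtype_le_sum fun k hk => hrest k hk x
      _ = _ := (hg x).symm

variable (hreal : ∀ p ∈ C, ∃ r : ℝ, lp p.1 p.2 = r) (hW : WilliamsCondition C lp)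
include hreal hW

lemma notMem_ElpSet_of_nonpos {g : X → ℝ} (hg0 : g ≤ 0) : g ∉ ElpSet C lp := by
  intro hg
  obtain ⟨ι, _, l, q, c, hl, hq, hc, hι | ⟨x, hx⟩, hle⟩ :=
    exists_sum_add_le_of_mem_ElpSet hreal hg
  · obtain ⟨j⟩ := hι
    obtain ⟨x, hxU, hx⟩ := hW l q 0 (q j) hl hq le_rfl (hq j) c hc
    have hxU : x ∈ ⋃ i, (q i).2 := hxU.elim (fun hx => Set.mem_iUnion_of_mem j hx) id
    have hle := hle x
    rw [ind_of_mem hxU, mul_one] at hle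
    simp only [williamsGain, zero_mul, sub_zero] at hx
    linarith [show g x ≤ 0 from hg0 x]
  · exact (hg0 x).not_gt hx

lemma coe_le_of_mem_ElpSet {f : X → ℝ} {B : Set X} (hfB : (f, B) ∈ C) {m : ℝ}
    (hm : (fun x => (f x - m) * ind B x) ∈ ElpSet C lp) : (m : EReal) ≤ lp f B := by
  obtain ⟨r, hr⟩ := hreal _ hfB
  rw [hr, EReal.coe_le_coe_iff]
  by_contra! hrm
  obtain ⟨ι, _, l, q, c, hl, hq, hc, -, hle⟩ := exists_sum_add_le_of_mem_ElpSet hreal hm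
  obtain ⟨x, hxU, hx⟩ := hW l q 1 (f, B) hl hq zero_le_one hfB _ (lt_min hc (sub_pos.2 hrm))
  have hle := hle x
  have hcU : 0 ≤ c * ind (⋃ i, (q i).2) x := mul_nonneg hc.le (ind_nonneg _ _)
  simp only [williamsGain, hr, EReal.toReal_coe, one_mul] at hx
  by_cases hxB : x ∈ B
  · rw [ind_of_mem hxB] at hle hx
    linarith [min_le_right c (m - r)]
  · rw [ind_of_notMem hxB] at hle hx
    rw [ind_of_mem (hxU.resolve_left hxB)] at hle
    linarith [min_le_left c (m - r)]

lemma coherentSDG_ElpSet (hC : C ⊆ domC X) : CoherentSDG (ElpSet C lp) where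
  subset_gambles _ := isGamble_of_mem_posi fun _ hh => hh.elim
    (fun ⟨p, hp, m, _, hpm⟩ => hpm ▸ isGamble_sub_mul_ind (hC hp).1 m p.2) (·.1)
  d1 _ hf h0 hne := mem_posi_of_mem (Or.inr ⟨hf, h0, hne⟩)
  d2 _ hf _ hl := smul_mem_posi hf hl
  d3 _ hf _ hg := add_mem_posi hf hg
  d4 _ hg := notMem_ElpSet_of_nonpos hreal hW hg

lemma lpOf_ElpSet {p : (X → ℝ) × Set X} (hp : p ∈ C) :
    lpOf (ElpSet C lp) p.1 p.2 = lp p.1 p.2 := by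
  obtain ⟨r, hr⟩ := hreal p hp
  refine le_antisymm (sSup_le ?_) ?_
  · rintro _ ⟨m, hm, rfl⟩
    exact coe_le_of_mem_ElpSet hreal hW hp hm
  · rw [hr]
    exact EReal.ge_of_forall_gt_iff_ge.1 fun z hz =>
      coe_le_lpOf (mem_posi_of_mem (Or.inl ⟨p, hp, z, hr ▸ hz, rfl⟩))

end Backward

theorem stmt2_general {X : Type*} (C : Set ((X → ℝ) × Set X)) (hC : C ⊆ domC X)
    (lp : (X → ℝ) → Set X → EReal) :
    Coherent C lp ↔
      ((∀ p ∈ C, ∃ r : ℝ, lp p.1 p.2 = (r : EReal)) ∧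
        ∀ (n : ℕ) (l : Fin (n + 1) → ℝ) (q : Fin (n + 1) → (X → ℝ) × Set X),
          (∀ i, 0 ≤ l i) → (∀ i, q i ∈ C) →
          0 ≤ sSup {y : ℝ | ∃ x ∈ ⋃ i, (q i).2, y =
            (∑ i : Fin n, l i.succ * ind (q i.succ).2 x *
              ((q i.succ).1 x - (lp (q i.succ).1 (q i.succ).2).toReal)) -
            l 0 * ind (q 0).2 x * ((q 0).1 x - (lp (q 0).1 (q 0).2).toReal)}) := by
  constructor
  · rintro ⟨D, hD, hlp⟩
    refine ⟨fun p hp => ⟨(lp p.1 p.2).toReal, ?_⟩,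
      (williamsCondition_iff_sSup hC).1 (hD.williamsCondition hC hlp)⟩
    rw [hlp p hp, hD.coe_toReal_lpOf (hC hp).1 (hC hp).2]
  · rintro ⟨hreal, hW⟩
    have hW : WilliamsCondition C lp := (williamsCondition_iff_sSup hC).2 hW
    exact ⟨ElpSet C lp, coherentSDG_ElpSet hreal hW hC,
      fun p hp => (lpOf_ElpSet hreal hW hp).symm⟩

/-- Proposition 3: coherence is equivalent to the Pelessoni–Vicig
(Williams) condition. -/
theorem stmt2 {X : Type*} [Nonempty X] (C : Set ((X → ℝ) × Set X)) (hC : C ⊆ domC X)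
    (lp : (X → ℝ) → Set X → EReal) :
    Coherent C lp ↔
      ((∀ p ∈ C, ∃ r : ℝ, lp p.1 p.2 = (r : EReal)) ∧
        ∀ (n : ℕ) (l : Fin (n + 1) → ℝ) (q : Fin (n + 1) → (X → ℝ) × Set X),
          (∀ i, 0 ≤ l i) → (∀ i, q i ∈ C) →
          0 ≤ sSup {y : ℝ | ∃ x ∈ ⋃ i, (q i).2, y =
            (∑ i : Fin n, l i.succ * ind (q i.succ).2 x *
              ((q i.succ).1 x - (lp (q i.succ).1 (q i.succ).2).toReal)) -
            l 0 * ind (q 0).2 x * ((q 0).1 x - (lp (q 0).1 (q 0).2).toReal)}) :=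
  stmt2_general C hC lp

end IPaper
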